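/- arXiv:2302.09684 — 5 statements merged into one kernel-verified Lean document; each statement's English description precedes it below -/
import Mathlib

section
/- Let a, b, c, d, λ, μ be positive real numbers and suppose 0 < ε < min{λ/(2a), (2dλ − bμ)/(bc + ad)}. Then there exists w* > 0 such that P′_{λ,ε}(w) < 0 for all w ∈ [0, w*), P′_{λ,ε}(w*) = 0, and P′_{λ,ε}(w) > 0 for all w > w*; in particular P_{λ,ε} is strictly decreasing on [0, w*] and strictly increasing on [w*, +∞). -/
/-- The cubic polynomial `P_{λ,ε}(w)` arising from the constant-coefficient
Holling–Tanner steady-state system. -/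
noncomputable def cubicP (a b c d μ ε lam w : ℝ) : ℝ :=
  w ^ 3 + (2 - lam / (ε * a)) * w ^ 2
    + (1 + b * c / (a * d) + (b * μ - 2 * d * lam) / (ε * a * d)) * w
    + (b * μ - d * lam) / (ε * a * d)

/-! `P′_{λ,ε}(w) = 3w² + 2Aw + B`, and `B < 0` exactly when `ε < (2dλ − bμ)/(bc + ad)`.
A real quadratic with positive leading coefficient and negative constant term has roots
`r₋ < 0 < r₊` and factors as `3(w − r₋)(w − r₊)`; on `[0, ∞)` its sign is that of `w − r₊`,
so `w* = r₊`, and the monotonicity of `P_{λ,ε}` follows from the sign of `P′`. -/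

section Quadratic

variable {α β γ : ℝ}

theorem quadratic_eq_mul_sub_mul_sub {s : ℝ} (hα : α ≠ 0) (hs : s ^ 2 = discrim α β γ) (w : ℝ) :
    α * w ^ 2 + β * w + γ
      = α * (w - (-β + s) / (2 * α)) * (w - (-β - s) / (2 * α)) := by
  rw [discrim] at hs
  field_simp
  linear_combination hs

theorem exists_pos_root_quadratic_sign (hα : 0 < α) (hγ : γ < 0) :
    ∃ r > 0, (∀ w, 0 ≤ w → w < r → α * w ^ 2 + β * w + γ < 0) ∧
      α * r ^ 2 + β * r + γ = 0 ∧ ∀ w, r < w → 0 < α * w ^ 2 + β * w + γ := by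
  set s := √(discrim α β γ)
  have hdisc : β ^ 2 < discrim α β γ := by rw [discrim]; nlinarith
  have hs : s ^ 2 = discrim α β γ := Real.sq_sqrt ((sq_nonneg β).trans hdisc.le)
  have hβs : |β| < s := Real.lt_sqrt_of_sq_lt (by rwa [sq_abs])
  have hpos : 0 < (-β + s) / (2 * α) := by
    apply div_pos _ (by positivity); linarith [le_abs_self β]
  have hneg : (-β - s) / (2 * α) < 0 := by
    apply div_neg_of_neg_of_pos _ (by positivity); linarith [neg_le_abs β]
  have hfac := quadratic_eq_mul_sub_mul_sub hα.ne' hs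
  refine ⟨(-β + s) / (2 * α), hpos, fun w hw₀ hw => ?_, by rw [hfac]; ring, fun w hw => ?_⟩
  · rw [hfac]
    exact mul_neg_of_neg_of_pos (mul_neg_of_pos_of_neg hα (by linarith)) (by linarith)
  · rw [hfac]
    exact mul_pos (mul_pos hα (by linarith)) (by linarith)

end Quadratic

theorem hasDerivAt_cubicP (a b c d μ ε lam w : ℝ) :
    HasDerivAt (cubicP a b c d μ ε lam)
      (3 * w ^ 2 + 2 * (2 - lam / (ε * a)) * w
        + (1 + b * c / (a * d) + (b * μ - 2 * d * lam) / (ε * a * d))) w := by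
  have h := (((hasDerivAt_pow 3 w).add
      ((hasDerivAt_pow 2 w).const_mul (2 - lam / (ε * a)))).add
      ((hasDerivAt_id w).const_mul
        (1 + b * c / (a * d) + (b * μ - 2 * d * lam) / (ε * a * d)))).add_const
      ((b * μ - d * lam) / (ε * a * d))
  exact h.congr_deriv (by push_cast; ring)

theorem deriv_cubicP (a b c d μ ε lam w : ℝ) :
    deriv (cubicP a b c d μ ε lam) w
      = 3 * w ^ 2 + 2 * (2 - lam / (ε * a)) * w
        + (1 + b * c / (a * d) + (b * μ - 2 * d * lam) / (ε * a * d)) :=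
  (hasDerivAt_cubicP a b c d μ ε lam w).deriv

theorem continuous_cubicP (a b c d μ ε lam : ℝ) : Continuous (cubicP a b c d μ ε lam) :=
  continuous_iff_continuousAt.2 fun w => (hasDerivAt_cubicP a b c d μ ε lam w).continuousAt

theorem cubicP_linear_coeff_neg {a b c d ε lam μ : ℝ} (ha : 0 < a) (hb : 0 < b) (hc : 0 < c)
    (hd : 0 < d) (hε : 0 < ε) (hε₂ : ε < (2 * d * lam - b * μ) / (b * c + a * d)) :
    1 + b * c / (a * d) + (b * μ - 2 * d * lam) / (ε * a * d) < 0 := by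
  have h := (lt_div_iff₀ (by positivity : 0 < b * c + a * d)).mp hε₂
  rw [show 1 + b * c / (a * d) + (b * μ - 2 * d * lam) / (ε * a * d)
      = (ε * (b * c + a * d) + (b * μ - 2 * d * lam)) / (ε * a * d) by field_simp; ring]
  exact div_neg_of_neg_of_pos (by linarith) (by positivity)

theorem stmt3_general (a b c d ε lam μ : ℝ)
    (ha : 0 < a) (hb : 0 < b) (hc : 0 < c) (hd : 0 < d)
    (hε : 0 < ε)
    (hε₂ : ε < (2 * d * lam - b * μ) / (b * c + a * d)) :
    ∃ ws : ℝ, 0 < ws ∧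
      (∀ w : ℝ, 0 ≤ w → w < ws → deriv (cubicP a b c d μ ε lam) w < 0) ∧
      deriv (cubicP a b c d μ ε lam) ws = 0 ∧
      (∀ w : ℝ, ws < w → 0 < deriv (cubicP a b c d μ ε lam) w) ∧
      StrictAntiOn (cubicP a b c d μ ε lam) (Set.Icc 0 ws) ∧
      StrictMonoOn (cubicP a b c d μ ε lam) (Set.Ici ws) := by
  obtain ⟨ws, hws, hneg, hzero, hpos⟩ :=
    exists_pos_root_quadratic_sign (β := 2 * (2 - lam / (ε * a))) three_pos
      (cubicP_linear_coeff_neg ha hb hc hd hε hε₂)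
  simp only [← deriv_cubicP] at hneg hzero hpos
  have hcont := continuous_cubicP a b c d μ ε lam
  refine ⟨ws, hws, hneg, hzero, hpos, ?_, ?_⟩
  · refine strictAntiOn_of_deriv_neg (convex_Icc 0 ws) hcont.continuousOn fun w hw => ?_
    rw [interior_Icc] at hw
    exact hneg w hw.1.le hw.2
  · refine strictMonoOn_of_deriv_pos (convex_Ici ws) hcont.continuousOn fun w hw => ?_
    rw [interior_Ici] at hw
    exact hpos w hw

/-- If `0 < ε < min{λ/(2a), (2dλ − bμ)/(bc + ad)}`, then there is `w* > 0`
with `P′ < 0` on `[0, w*)`, `P′(w*) = 0` and `P′ > 0` on `(w*, ∞)`; in particular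
`P_{λ,ε}` is strictly decreasing on `[0, w*]` and strictly increasing on `[w*, ∞)`. -/
theorem stmt3 (a b c d ε lam μ : ℝ)
    (ha : 0 < a) (hb : 0 < b) (hc : 0 < c) (hd : 0 < d)
    (hlam : 0 < lam) (hμ : 0 < μ) (hε : 0 < ε)
    (hε₁ : ε < lam / (2 * a)) (hε₂ : ε < (2 * d * lam - b * μ) / (b * c + a * d)) :
    ∃ ws : ℝ, 0 < ws ∧
      (∀ w : ℝ, 0 ≤ w → w < ws → deriv (cubicP a b c d μ ε lam) w < 0) ∧
      deriv (cubicP a b c d μ ε lam) ws = 0 ∧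
      (∀ w : ℝ, ws < w → 0 < deriv (cubicP a b c d μ ε lam) w) ∧
      StrictAntiOn (cubicP a b c d μ ε lam) (Set.Icc 0 ws) ∧
      StrictMonoOn (cubicP a b c d μ ε lam) (Set.Ici ws) :=
  stmt3_general a b c d ε lam μ ha hb hc hd hε hε₂
end

section
/- Let a, b, c, d, μ be positive real numbers, let λ > bμ/d, and suppose 0 < ε < min{λ/(2a), (2dλ − bμ)/(bc + ad)}. Then P_{λ,ε} has exactly one root in (0, +∞). -/
/-- A monic cubic with all lower coefficients negative has exactly one positive root. -/
lemma cubic_neg_coeffs_unique_pos_root (A B C : ℝ)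
    (hA : A < 0) (hB : B < 0) (hC : C < 0) :
    ∃! x : ℝ, 0 < x ∧ x ^ 3 + A * x ^ 2 + B * x + C = 0 := by
  set f : ℝ → ℝ := fun x => x ^ 3 + A * x ^ 2 + B * x + C with hf
  set M : ℝ := 1 - A - B - C with hM
  have hM1 : 1 < M := by simp only [hM]; linarith
  have hMpos : 0 < M := by linarith
  have hfM : 0 < f M := by
    have hMM : M < M ^ 2 := by nlinarith
    have h1M : 1 < M ^ 2 := by nlinarith
    have : M ^ 2 * (M + A + B + C) ≤ M ^ 3 + A * M ^ 2 + B * M + C := by nlinarith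
    have h2 : M + A + B + C = 1 := by simp only [hM]; ring
    simp only [hf]
    nlinarith
  have hf0 : f 0 < 0 := by simp [hf]; linarith
  have hcont : ContinuousOn f (Set.Icc 0 M) := by
    apply Continuous.continuousOn; fun_prop
  have hivt := intermediate_value_Ioo (le_of_lt hMpos) hcont
  have h0mem : (0 : ℝ) ∈ Set.Ioo (f 0) (f M) := ⟨hf0, hfM⟩
  obtain ⟨x, hx, hfx⟩ := hivt h0mem
  refine ⟨x, ⟨hx.1, hfx⟩, ?_⟩
  rintro y ⟨hy, hfy⟩
  -- uniqueness
  have hx1 : 0 < x := hx.1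
  have key : (x - y) * (A * x ^ 2 * y ^ 2 + B * x * y * (x + y)
      + C * (x ^ 2 + x * y + y ^ 2)) = 0 := by
    have e1 : x ^ 3 + A * x ^ 2 + B * x + C = 0 := hfx
    have e2 : y ^ 3 + A * y ^ 2 + B * y + C = 0 := hfy
    linear_combination x ^ 3 * e2 - y ^ 3 * e1
  have hbr : A * x ^ 2 * y ^ 2 + B * x * y * (x + y)
      + C * (x ^ 2 + x * y + y ^ 2) < 0 := by
    have h1 : A * x ^ 2 * y ^ 2 < 0 := by
      have : 0 < x ^ 2 * y ^ 2 := by positivity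
      nlinarith
    have h2 : B * (x * y * (x + y)) < 0 := by
      have : 0 < x * y * (x + y) := by positivity
      nlinarith
    have h3 : C * (x ^ 2 + x * y + y ^ 2) < 0 := by
      have : 0 < x ^ 2 + x * y + y ^ 2 := by positivity
      nlinarith
    nlinarith
  have := mul_eq_zero.mp key
  rcases this with h | h
  · linarith [sub_eq_zero.mp h]
  · exact absurd h (ne_of_lt hbr)

/-- If `λ > bμ/d` and `0 < ε < min{λ/(2a), (2dλ − bμ)/(bc + ad)}`, then
`P_{λ,ε}` has exactly one root in `(0, ∞)`. -/
theorem stmt4 (a b c d ε lam μ : ℝ)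
    (ha : 0 < a) (hb : 0 < b) (hc : 0 < c) (hd : 0 < d)
    (hμ : 0 < μ) (hlam : b * μ / d < lam) (hε : 0 < ε)
    (hε₁ : ε < lam / (2 * a)) (hε₂ : ε < (2 * d * lam - b * μ) / (b * c + a * d)) :
    ∃! w : ℝ, 0 < w ∧ cubicP a b c d μ ε lam w = 0 := by
  have hεa : 0 < ε * a := by positivity
  have hεad : 0 < ε * a * d := by positivity
  have had : 0 < a * d := by positivity
  have hbcad : 0 < b * c + a * d := by positivity
  have h1 : ε * (2 * a) < lam := (lt_div_iff₀ (by positivity)).mp hε₁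
  have h2 : ε * (b * c + a * d) < 2 * d * lam - b * μ := (lt_div_iff₀ hbcad).mp hε₂
  have h3 : b * μ < d * lam := by
    have := (div_lt_iff₀ hd).mp hlam
    linarith
  set A : ℝ := 2 - lam / (ε * a) with hA
  set B : ℝ := 1 + b * c / (a * d) + (b * μ - 2 * d * lam) / (ε * a * d) with hB
  set C : ℝ := (b * μ - d * lam) / (ε * a * d) with hC
  have hAneg : A < 0 := by
    have : A = (2 * (ε * a) - lam) / (ε * a) := by
      rw [hA]; field_simp
    rw [this]
    apply div_neg_of_neg_of_pos _ hεa
    linarith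
  have hBneg : B < 0 := by
    have : B = (ε * a * d + ε * b * c + b * μ - 2 * d * lam) / (ε * a * d) := by
      rw [hB]; field_simp; ring
    rw [this]
    apply div_neg_of_neg_of_pos _ hεad
    nlinarith
  have hCneg : C < 0 := by
    apply div_neg_of_neg_of_pos _ hεad
    linarith
  have hform : ∀ w : ℝ, cubicP a b c d μ ε lam w = w ^ 3 + A * w ^ 2 + B * w + C := by
    intro w
    rw [cubicP, hA, hB, hC]
  simp only [hform]
  exact cubic_neg_coeffs_unique_pos_root A B C hAneg hBneg hCneg
end

section
/- Let a, b, c, d, μ be positive real numbers and let λ > bμ/d. Then there exists ε₀ > 0 such that for every ε ∈ (0, ε₀) the system (S), i.e. λ − εaw − b·v/(1+w) = 0 and μ − d·v + ε·c·w/(1+w) = 0, has exactly one solution (w, v) with w > 0 and v > 0. -/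
open Polynomial in
lemma four_roots_cubic (A B C D : ℝ) (hA : A ≠ 0) (x₁ x₂ x₃ x₄ : ℝ)
    (h12 : x₁ < x₂) (h23 : x₂ < x₃) (h34 : x₃ < x₄)
    (e1 : A * x₁ ^ 3 + B * x₁ ^ 2 + C * x₁ + D = 0)
    (e2 : A * x₂ ^ 3 + B * x₂ ^ 2 + C * x₂ + D = 0)
    (e3 : A * x₃ ^ 3 + B * x₃ ^ 2 + C * x₃ + D = 0)
    (e4 : A * x₄ ^ 3 + B * x₄ ^ 2 + C * x₄ + D = 0) : False := by
  set p : ℝ[X] := Polynomial.C A * X ^ 3 + Polynomial.C B * X ^ 2 + Polynomial.C C * X + Polynomial.C D with hp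
  have hdeg : p.natDegree ≤ 3 := by
    rw [hp]; compute_degree
  have hpne : p ≠ 0 := by
    intro h
    have h3 : p.coeff 3 = A := by simp [hp, coeff_add, coeff_C_mul]
    rw [h] at h3
    simp at h3
    exact hA h3.symm
  have hroot : ∀ x : ℝ, A * x ^ 3 + B * x ^ 2 + C * x + D = 0 → x ∈ p.roots.toFinset := by
    intro x hx
    rw [Multiset.mem_toFinset, mem_roots hpne]
    simp [hp, IsRoot, hx]
  have hsub : ({x₁, x₂, x₃, x₄} : Finset ℝ) ⊆ p.roots.toFinset := by
    intro x hx
    simp only [Finset.mem_insert, Finset.mem_singleton] at hx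
    rcases hx with rfl | rfl | rfl | rfl
    · exact hroot _ e1
    · exact hroot _ e2
    · exact hroot _ e3
    · exact hroot _ e4
  have n1 : x₁ ∉ ({x₂, x₃, x₄} : Finset ℝ) := by
    simp only [Finset.mem_insert, Finset.mem_singleton]
    push_neg
    exact ⟨ne_of_lt h12, ne_of_lt (h12.trans h23), ne_of_lt ((h12.trans h23).trans h34)⟩
  have n2 : x₂ ∉ ({x₃, x₄} : Finset ℝ) := by
    simp only [Finset.mem_insert, Finset.mem_singleton]
    push_neg
    exact ⟨ne_of_lt h23, ne_of_lt (h23.trans h34)⟩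
  have n3 : x₃ ∉ ({x₄} : Finset ℝ) := by
    simp only [Finset.mem_singleton]
    exact ne_of_lt h34
  have hcard : ({x₁, x₂, x₃, x₄} : Finset ℝ).card = 4 := by
    rw [Finset.card_insert_of_notMem n1, Finset.card_insert_of_notMem n2,
      Finset.card_insert_of_notMem n3, Finset.card_singleton]
  have h1 : ({x₁, x₂, x₃, x₄} : Finset ℝ).card ≤ p.roots.toFinset.card :=
    Finset.card_le_card hsub
  have h2 : p.roots.toFinset.card ≤ Multiset.card p.roots := Multiset.toFinset_card_le _
  have h3 : Multiset.card p.roots ≤ p.natDegree := p.card_roots'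
  omega

/-- For `λ > bμ/d` there exists `ε₀ > 0` such that for every
`ε ∈ (0, ε₀)` the system (S) has exactly one solution `(w, v)` with `w, v > 0`. -/
theorem stmt6 (a b c d lam μ : ℝ)
    (ha : 0 < a) (hb : 0 < b) (hc : 0 < c) (hd : 0 < d)
    (hμ : 0 < μ) (hlam : b * μ / d < lam) :
    ∃ ε₀ : ℝ, 0 < ε₀ ∧ ∀ ε : ℝ, 0 < ε → ε < ε₀ →
      ∃! p : ℝ × ℝ, 0 < p.1 ∧ 0 < p.2 ∧
        lam - ε * a * p.1 - b * (p.2 / (1 + p.1)) = 0 ∧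
        μ - d * p.2 + ε * c * (p.1 / (1 + p.1)) = 0 := by
  have hbμ : b * μ < d * lam := by
    rw [div_lt_iff₀ hd] at hlam; linarith
  have hdl : 0 < d * lam := lt_trans (by positivity) hbμ
  have hlam0 : 0 < lam := by
    by_contra hcon; push_neg at hcon; nlinarith
  set m : ℝ := b * μ / (2 * (d * lam)) - 1 with hm_def
  have hm1 : -1 < m := by
    have : 0 < b * μ / (2 * (d * lam)) := by positivity
    simp only [hm_def]; linarith
  have hm0 : m < 0 := by
    have : b * μ / (2 * (d * lam)) < 1 := by
      rw [div_lt_one (by positivity)]; linarith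
    simp only [hm_def]; linarith
  set R : ℝ := |a * d * (m ^ 3 + 2 * m ^ 2 + m) + b * c * m| with hR_def
  have hR0 : 0 ≤ R := abs_nonneg _
  refine ⟨(b ^ 2 * μ ^ 2 / (4 * (d * lam))) / (R + 1), by positivity, ?_⟩
  intro ε hε0 hεε
  set H : ℝ → ℝ := fun w => ε * a * d * w ^ 3 + (2 * (ε * a * d) - d * lam) * w ^ 2
    + (ε * a * d + ε * b * c + b * μ - 2 * (d * lam)) * w + (b * μ - d * lam) with hH_def
  have hcont : Continuous H := by
    simp only [hH_def]; fun_prop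
  have hHneg1 : H (-1) < 0 := by
    have : H (-1) = -(ε * b * c) := by simp only [hH_def]; ring
    have h' : 0 < ε * b * c := by positivity
    rw [this]; linarith
  have hH0 : H 0 < 0 := by
    have : H 0 = b * μ - d * lam := by simp only [hH_def]; ring
    rw [this]; linarith
  -- value at m
  have hsm : d * lam * m ^ 2 + (2 * (d * lam) - b * μ) * m + (d * lam - b * μ)
      = -(b ^ 2 * μ ^ 2 / (4 * (d * lam))) := by
    simp only [hm_def]
    field_simp
    ring
  have hHm : 0 < H m := by
    have hsplit : H m = ε * (a * d * (m ^ 3 + 2 * m ^ 2 + m) + b * c * m)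
        - (d * lam * m ^ 2 + (2 * (d * lam) - b * μ) * m + (d * lam - b * μ)) := by
      simp only [hH_def]; ring
    rw [hsplit, hsm]
    have h1 : -(R) ≤ a * d * (m ^ 3 + 2 * m ^ 2 + m) + b * c * m := neg_abs_le _
    have h2 : ε * (R + 1) < b ^ 2 * μ ^ 2 / (4 * (d * lam)) := by
      rw [← lt_div_iff₀ (by positivity)]
      exact hεε
    have h3 : ε * R + ε = ε * (R + 1) := by ring
    have h4 : ε * (-R) = -(ε * R) := by ring
    have h5 := mul_le_mul_of_nonneg_left h1 hε0.le
    set B := b ^ 2 * μ ^ 2 / (4 * (d * lam)) with hB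
    set rm := a * d * (m ^ 3 + 2 * m ^ 2 + m) + b * c * m with hrm
    nlinarith [h5, h2, hε0]
    -- large point where H is positive
  set T : ℝ := 4 * lam / (ε * a) + 1 with hT_def
  have hT1 : 1 < T := by
    have : 0 < 4 * lam / (ε * a) := by positivity
    simp only [hT_def]; linarith
  have hTa : ε * a * T = 4 * lam + ε * a := by
    simp only [hT_def]; field_simp
  have hHT : 0 < H T := by
    have hT0 : 0 < T := by linarith
    have key : ε * a * d * T ^ 3 = (4 * lam + ε * a) * d * T ^ 2 := by
      rw [← hTa]; ring
    have expand : H T = ε * a * d * T ^ 3 + (2 * (ε * a * d) - d * lam) * T ^ 2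
        + (ε * a * d + ε * b * c + b * μ - 2 * (d * lam)) * T + (b * μ - d * lam) := by
      simp only [hH_def]
    rw [expand, key]
    have geq : (4 * lam + ε * a) * d * T ^ 2 + (2 * (ε * a * d) - d * lam) * T ^ 2
        + (ε * a * d + ε * b * c + b * μ - 2 * (d * lam)) * T + (b * μ - d * lam)
        = d * lam * ((3 * T + 1) * (T - 1)) + ε * a * d * (3 * T ^ 2 + T)
          + ε * b * c * T + b * μ * T + b * μ := by ring
    rw [geq]
    have p1 : 0 < d * lam * ((3 * T + 1) * (T - 1)) :=
      mul_pos hdl (mul_pos (by linarith) (by linarith))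
    have p2 : 0 < ε * a * d * (3 * T ^ 2 + T) := by positivity
    have p3 : 0 < ε * b * c * T := by positivity
    have p4 : 0 < b * μ * T := by positivity
    have p5 : 0 < b * μ := by positivity
    linarith
  -- three roots via IVT
  obtain ⟨x₁, hx₁mem, hx₁⟩ : ∃ x ∈ Set.Ioo (-1 : ℝ) m, H x = 0 := by
    have h := intermediate_value_Ioo hm1.le hcont.continuousOn
    have : (0 : ℝ) ∈ Set.Ioo (H (-1)) (H m) := ⟨hHneg1, hHm⟩
    obtain ⟨x, hx, hx0⟩ := h this
    exact ⟨x, hx, hx0⟩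
  obtain ⟨x₂, hx₂mem, hx₂⟩ : ∃ x ∈ Set.Ioo m (0 : ℝ), H x = 0 := by
    have h := intermediate_value_Ioo' hm0.le hcont.continuousOn
    have : (0 : ℝ) ∈ Set.Ioo (H 0) (H m) := ⟨hH0, hHm⟩
    obtain ⟨x, hx, hx0⟩ := h this
    exact ⟨x, hx, hx0⟩
  obtain ⟨w, hwmem, hw⟩ : ∃ x ∈ Set.Ioo (0 : ℝ) T, H x = 0 := by
    have h := intermediate_value_Ioo (by linarith : (0:ℝ) ≤ T) hcont.continuousOn
    have : (0 : ℝ) ∈ Set.Ioo (H 0) (H T) := ⟨hH0, hHT⟩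
    obtain ⟨x, hx, hx0⟩ := h this
    exact ⟨x, hx, hx0⟩
  have hw0 : 0 < w := hwmem.1
  have hw1 : (0 : ℝ) < 1 + w := by linarith
  -- every solution gives a root of H and determined v
  have hsolroot : ∀ w' v' : ℝ, 0 < w' →
      lam - ε * a * w' - b * (v' / (1 + w')) = 0 →
      μ - d * v' + ε * c * (w' / (1 + w')) = 0 →
      H w' = 0 ∧ d * v' * (1 + w') = μ * (1 + w') + ε * c * w' := by
    intro w' v' hw' e1 e2
    have hw1' : (0 : ℝ) < 1 + w' := by linarith
    have hw1'' : (1 : ℝ) + w' ≠ 0 := ne_of_gt hw1'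
    have e2' : d * v' * (1 + w') = μ * (1 + w') + ε * c * w' := by
      field_simp at e2
      linarith
    have e1' : lam * (1 + w') - ε * a * w' * (1 + w') - b * v' = 0 := by
      field_simp at e1
      linarith
    refine ⟨?_, e2'⟩
    have comb : H w' = -(d * (1 + w') * (lam * (1 + w') - ε * a * w' * (1 + w') - b * v')
        - b * (μ * (1 + w') + ε * c * w' - d * v' * (1 + w'))) := by
      simp only [hH_def]; ring
    rw [comb, e1']
    have : μ * (1 + w') + ε * c * w' - d * v' * (1 + w') = 0 := by linarith
    rw [this]; ring
  -- the solution
  set v : ℝ := (μ * (1 + w) + ε * c * w) / (d * (1 + w)) with hv_def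
  have hv0 : 0 < v := by
    simp only [hv_def]
    positivity
  have he2 : μ - d * v + ε * c * (w / (1 + w)) = 0 := by
    simp only [hv_def]
    field_simp
    ring
  have he1 : lam - ε * a * w - b * (v / (1 + w)) = 0 := by
    have hHw := hw
    simp only [hH_def] at hHw
    simp only [hv_def]
    field_simp
    linear_combination (-(1 : ℝ)) * hHw
  have hA : ε * a * d ≠ 0 := by positivity
  -- uniqueness of positive root
  have huniq : ∀ w' : ℝ, 0 < w' → H w' = 0 → w' = w := by
    intro w' hw' hHw'
    by_contra hne
    have hx₁x₂ : x₁ < x₂ := lt_trans hx₁mem.2 hx₂mem.1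
    have hx₂0 : x₂ < 0 := hx₂mem.2
    have root : ∀ x : ℝ, H x = 0 → ε * a * d * x ^ 3 + (2 * (ε * a * d) - d * lam) * x ^ 2
        + (ε * a * d + ε * b * c + b * μ - 2 * (d * lam)) * x + (b * μ - d * lam) = 0 := by
      intro x hx
      simpa only [hH_def] using hx
    rcases lt_or_gt_of_ne hne with hlt | hgt
    · exact four_roots_cubic _ _ _ _ hA x₁ x₂ w' w hx₁x₂ (by linarith) hlt
        (root _ hx₁) (root _ hx₂) (root _ hHw') (root _ hw)
    · exact four_roots_cubic _ _ _ _ hA x₁ x₂ w w' hx₁x₂ (by linarith) hgt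
        (root _ hx₁) (root _ hx₂) (root _ hw) (root _ hHw')
  refine ⟨(w, v), ⟨hw0, hv0, he1, he2⟩, ?_⟩
  rintro ⟨w', v'⟩ ⟨hw', hv', e1, e2⟩
  simp only at hw' hv' e1 e2
  obtain ⟨hroot', hveq'⟩ := hsolroot w' v' hw' e1 e2
  have hww : w' = w := huniq w' hw' hroot'
  subst hww
  have hveq : d * v * (1 + w') = μ * (1 + w') + ε * c * w' := by
    obtain ⟨_, h⟩ := hsolroot w' v hw' he1 he2
    exact h
  have hvv : v' = v := by
    have hpos : 0 < d * (1 + w') := by positivity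
    have h0 : d * v' * (1 + w') = d * v * (1 + w') := by rw [hveq', hveq]
    have h1 : v' * (d * (1 + w')) = v * (d * (1 + w')) := by linear_combination h0
    exact mul_right_cancel₀ (ne_of_gt hpos) h1
  rw [hvv]
end

section
/- Let a, b, c, d, μ be positive real numbers with bc > ad, and set λ₀ = bμ/d and ε* = bμ/(bc + ad). Then there exists δ > 0 such that for every ε ∈ (ε*, ε* + δ) there exists η > 0 with the following property: for every λ ∈ (λ₀, λ₀ + η) the cubic P_{λ,ε} has exactly three distinct real roots and all three are positive, while for every λ ∈ (λ₀ − η, λ₀) the cubic P_{λ,ε} has exactly three distinct real roots of which exactly two are positive. -/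
set_option maxHeartbeats 1000000

private lemma cubic_factor (A B C r₁ r₂ r₃ : ℝ) (h12 : r₁ < r₂) (h23 : r₂ < r₃)
    (e1 : r₁^3 + A*r₁^2 + B*r₁ + C = 0)
    (e2 : r₂^3 + A*r₂^2 + B*r₂ + C = 0)
    (e3 : r₃^3 + A*r₃^2 + B*r₃ + C = 0) (w : ℝ) :
    w^3 + A*w^2 + B*w + C = (w - r₁) * ((w - r₂) * (w - r₃)) := by
  have h12' : r₂ - r₁ ≠ 0 := by intro h; nlinarith
  have h13' : r₃ - r₁ ≠ 0 := by intro h; nlinarith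
  have h23' : r₃ - r₂ ≠ 0 := by intro h; nlinarith
  have f12 : (r₂ - r₁) * (r₂^2 + r₁*r₂ + r₁^2 + A*(r₁+r₂) + B) = 0 := by
    linear_combination e2 - e1
  have g12 : r₂^2 + r₁*r₂ + r₁^2 + A*(r₁+r₂) + B = 0 :=
    (mul_eq_zero.1 f12).resolve_left h12'
  have f13 : (r₃ - r₁) * (r₃^2 + r₁*r₃ + r₁^2 + A*(r₁+r₃) + B) = 0 := by
    linear_combination e3 - e1
  have g13 : r₃^2 + r₁*r₃ + r₁^2 + A*(r₁+r₃) + B = 0 :=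
    (mul_eq_zero.1 f13).resolve_left h13'
  have f23 : (r₃ - r₂) * (r₁ + r₂ + r₃ + A) = 0 := by
    linear_combination g13 - g12
  have hA : A = -(r₁ + r₂ + r₃) := by
    have := (mul_eq_zero.1 f23).resolve_left h23'
    linarith
  subst hA
  have hB : B = r₁*r₂ + r₁*r₃ + r₂*r₃ := by linear_combination g12
  subst hB
  have hC : C = -(r₁*r₂*r₃) := by linear_combination e1
  subst hC
  ring

private lemma cubic_rootset (A B C r₁ r₂ r₃ : ℝ) (h12 : r₁ < r₂) (h23 : r₂ < r₃)
    (e1 : r₁^3 + A*r₁^2 + B*r₁ + C = 0)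
    (e2 : r₂^3 + A*r₂^2 + B*r₂ + C = 0)
    (e3 : r₃^3 + A*r₃^2 + B*r₃ + C = 0) :
    {w : ℝ | w^3 + A*w^2 + B*w + C = 0} = {r₁, r₂, r₃} := by
  ext w
  simp only [Set.mem_setOf_eq, Set.mem_insert_iff, Set.mem_singleton_iff]
  rw [cubic_factor A B C r₁ r₂ r₃ h12 h23 e1 e2 e3 w]
  constructor
  · intro h
    rcases mul_eq_zero.1 h with h | h
    · exact Or.inl (by linarith [sub_eq_zero.1 h])
    · rcases mul_eq_zero.1 h with h | h
      · exact Or.inr (Or.inl (sub_eq_zero.1 h))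
      · exact Or.inr (Or.inr (sub_eq_zero.1 h))
  · rintro (rfl | rfl | rfl) <;> ring

private lemma ivt_up {f : ℝ → ℝ} (hf : Continuous f) {x y : ℝ} (hxy : x ≤ y)
    (hx : f x < 0) (hy : 0 < f y) : ∃ r ∈ Set.Ioo x y, f r = 0 := by
  obtain ⟨r, hr, hr0⟩ := intermediate_value_Ioo hxy hf.continuousOn
    (Set.mem_Ioo.2 ⟨hx, hy⟩)
  exact ⟨r, hr, hr0⟩

private lemma ivt_down {f : ℝ → ℝ} (hf : Continuous f) {x y : ℝ} (hxy : x ≤ y)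
    (hx : 0 < f x) (hy : f y < 0) : ∃ r ∈ Set.Ioo x y, f r = 0 := by
  obtain ⟨r, hr, hr0⟩ := intermediate_value_Ioo' hxy hf.continuousOn
    (Set.mem_Ioo.2 ⟨hy, hx⟩)
  exact ⟨r, hr, hr0⟩

private lemma sign_facts (s σ C t : ℝ) (hs : 0 < s) (hσ : 0 < σ)
    (hσ₀ : σ ≤ s^2/(8*(s+2))) (h2st : 2*s*t = σ)
    (hCa : |C| < σ^2/(32*s)) (hCb : |C| < 2*s^3/(2*s+1)^2)
    (hCd : |C| < s^3/(8*(s+2)^2)) :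
    0 < t^2*(t-s) + σ*t*(t+1) + C*(t+1)^2 ∧
    (s/2)^2*(s/2-s) + σ*(s/2)*(s/2+1) + C*(s/2+1)^2 < 0 ∧
    0 < (2*s)^2*(2*s-s) + σ*(2*s)*(2*s+1) + C*(2*s+1)^2 ∧
    t < s/2 ∧ 0 < t := by
  have ht : 0 < t := by nlinarith [h2st, hσ, hs]
  have h1 : σ * (8*(s+2)) ≤ s^2 := (le_div_iff₀ (by positivity)).mp hσ₀
  have htb : 16*t*(s+2) ≤ s := by nlinarith [h2st, hs]
  have ht16 : 16*t < 1 := by nlinarith [htb, mul_pos ht hs]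
  have hts : 32*t ≤ s := by nlinarith [htb, mul_pos ht hs]
  have htp1 : (t+1)^2 < 2 := by nlinarith [ht16, ht]
  have hCa_eq : σ^2/(32*s) = s*t^2/8 := by
    rw [← h2st]; field_simp; ring
  have hCa' : -(s*t^2/8) < C ∧ C < s*t^2/8 := by
    have := abs_lt.1 hCa; rw [hCa_eq] at this; exact this
  have hCb' := abs_lt.1 hCb
  have hCd' := abs_lt.1 hCd
  refine ⟨?_, ?_, ?_, by linarith, ht⟩
  · -- 0 < g t
    have hexp : t^2*(t-s) + σ*t*(t+1) + C*(t+1)^2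
        = t^3 + s*t^2 + 2*s*t^3 + C*(t+1)^2 := by
      linear_combination (-(t*(t+1)))*h2st
    rw [hexp]
    rcases le_or_gt 0 C with h | h
    · nlinarith [pow_pos ht 3, mul_pos hs (mul_pos ht ht), mul_pos hs (pow_pos ht 3),
        mul_nonneg h (sq_nonneg (t+1))]
    · have hX : C*2 < C*(t+1)^2 := by nlinarith [htp1, h]
      nlinarith [hX, hCa'.1, pow_pos ht 3, mul_pos hs (mul_pos ht ht),
        mul_pos hs (pow_pos ht 3)]
  · -- g (s/2) < 0
    have hexp : (s/2)^2*(s/2-s) + σ*(s/2)*(s/2+1) + C*(s/2+1)^2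
        = -(s^3)/8 + σ*(s*(s+2))/4 + C*(s+2)^2/4 := by ring
    rw [hexp]
    have hsig : σ*(s*(s+2)) ≤ s^3/8 := by nlinarith [h1, hs, hσ]
    have hCd2 : C*(s+2)^2 < s^3/8 := by
      have h := mul_lt_mul_of_pos_right hCd'.2 (show (0:ℝ) < (s+2)^2 by positivity)
      have h2 : s^3/(8*(s+2)^2) * (s+2)^2 = s^3/8 := by
        field_simp
        try ring
      linarith [h, h2.symm ▸ h]
    nlinarith [pow_pos hs 3]
  · -- 0 < g (2*s)
    have hCb2 : -(2*s^3) < C*(2*s+1)^2 := by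
      have h := mul_lt_mul_of_pos_right hCb'.1 (show (0:ℝ) < (2*s+1)^2 by positivity)
      have h2 : 2*s^3/(2*s+1)^2 * (2*s+1)^2 = 2*s^3 := by
        field_simp
        try ring
      nlinarith [h, h2]
    nlinarith [pow_pos hs 3, mul_pos hσ (mul_pos (mul_pos two_pos hs)
      (by linarith : (0:ℝ) < 2*s+1))]

private lemma roots_neg (s σ C t : ℝ) (hs : 0 < s) (hσ : 0 < σ)
    (hσ₀ : σ ≤ s^2/(8*(s+2))) (h2st : 2*s*t = σ)
    (hCa : |C| < σ^2/(32*s)) (hCb : |C| < 2*s^3/(2*s+1)^2)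
    (hCd : |C| < s^3/(8*(s+2)^2)) (hC0 : C < 0) :
    ∃ r₁ r₂ r₃ : ℝ, 0 < r₁ ∧ r₁ < r₂ ∧ r₂ < r₃ ∧
      {w : ℝ | w^2*(w-s) + σ*w*(w+1) + C*(w+1)^2 = 0} = {r₁, r₂, r₃} := by
  obtain ⟨hgt, hgs2, hg2s, hts2, ht⟩ := sign_facts s σ C t hs hσ hσ₀ h2st hCa hCb hCd
  have hgc : Continuous fun w : ℝ => w^2*(w-s) + σ*w*(w+1) + C*(w+1)^2 := by fun_prop
  obtain ⟨r₁, hm₁, hz₁⟩ := ivt_up hgc (le_of_lt ht)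
    (by show (0:ℝ)^2*(0-s) + σ*0*(0+1) + C*(0+1)^2 < 0; nlinarith) hgt
  obtain ⟨r₂, hm₂, hz₂⟩ := ivt_down hgc (le_of_lt hts2) hgt hgs2
  obtain ⟨r₃, hm₃, hz₃⟩ := ivt_up hgc (by linarith : s/2 ≤ 2*s) hgs2 hg2s
  obtain ⟨h10, h1t⟩ := hm₁
  obtain ⟨h2t, h2s⟩ := hm₂
  obtain ⟨h3s, h3s'⟩ := hm₃
  have h12 : r₁ < r₂ := by linarith
  have h23 : r₂ < r₃ := by linarith
  refine ⟨r₁, r₂, r₃, h10, h12, h23, ?_⟩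
  have hset : {w : ℝ | w^2*(w-s) + σ*w*(w+1) + C*(w+1)^2 = 0}
      = {w : ℝ | w^3 + (σ+C-s)*w^2 + (σ+2*C)*w + C = 0} := by
    ext w
    simp only [Set.mem_setOf_eq]
    rw [show w^2*(w-s) + σ*w*(w+1) + C*(w+1)^2
      = w^3 + (σ+C-s)*w^2 + (σ+2*C)*w + C from by ring]
  rw [hset]
  exact cubic_rootset (σ+C-s) (σ+2*C) C r₁ r₂ r₃ h12 h23
    (by linear_combination hz₁) (by linear_combination hz₂) (by linear_combination hz₃)

private lemma roots_pos (s σ C t : ℝ) (hs : 0 < s) (hσ : 0 < σ)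
    (hσ₀ : σ ≤ s^2/(8*(s+2))) (h2st : 2*s*t = σ)
    (hCa : |C| < σ^2/(32*s)) (hCb : |C| < 2*s^3/(2*s+1)^2)
    (hCc : |C| < σ/8) (hCd : |C| < s^3/(8*(s+2)^2)) (hC0 : 0 < C) :
    ∃ r₁ r₂ r₃ : ℝ, r₁ ≤ 0 ∧ 0 < r₂ ∧ r₁ < r₂ ∧ r₂ < r₃ ∧
      {w : ℝ | w^2*(w-s) + σ*w*(w+1) + C*(w+1)^2 = 0} = {r₁, r₂, r₃} := by
  obtain ⟨hgt, hgs2, hg2s, hts2, ht⟩ := sign_facts s σ C t hs hσ hσ₀ h2st hCa hCb hCd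
  have hgc : Continuous fun w : ℝ => w^2*(w-s) + σ*w*(w+1) + C*(w+1)^2 := by fun_prop
  set q := 2*C/(s*t) with hq_def
  have hst : (0:ℝ) < s*t := mul_pos hs ht
  have hq : q*(s*t) = 2*C := by rw [hq_def]; field_simp
  have hqpos : 0 < q := by rw [hq_def]; positivity
  clear_value q
  have hσq : σ*q = 4*C := by linear_combination 2*hq - q*h2st
  have hCc' : C < σ/8 := (abs_lt.1 hCc).2
  have hqh : q < 1/2 := by nlinarith [hq, hCc', hst, h2st]
  have hgq : (-q)^2*(-q-s) + σ*(-q)*(-q+1) + C*(-q+1)^2 < 0 := by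
    have hexp : (-q)^2*(-q-s) + σ*(-q)*(-q+1) + C*(-q+1)^2
        = -(q^3) - s*q^2 - 4*C*(1-q) + C*(1-q)^2 := by
      linear_combination (-(1-q))*hσq
    rw [hexp]
    nlinarith [mul_pos hC0 (mul_pos (show (0:ℝ) < 1-q by linarith)
      (show (0:ℝ) < 3+q by linarith)), pow_pos hqpos 3,
      mul_pos hs (mul_pos hqpos hqpos)]
  obtain ⟨r₁, hm₁, hz₁⟩ := ivt_up hgc (by linarith : -q ≤ 0) hgq
    (by show (0:ℝ) < 0^2*(0-s) + σ*0*(0+1) + C*(0+1)^2; nlinarith)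
  obtain ⟨r₂, hm₂, hz₂⟩ := ivt_down hgc (le_of_lt hts2) hgt hgs2
  obtain ⟨r₃, hm₃, hz₃⟩ := ivt_up hgc (by linarith : s/2 ≤ 2*s) hgs2 hg2s
  obtain ⟨h1q, h10⟩ := hm₁
  obtain ⟨h2t, h2s⟩ := hm₂
  obtain ⟨h3s, h3s'⟩ := hm₃
  have h02 : 0 < r₂ := by linarith
  have h12 : r₁ < r₂ := by linarith
  have h23 : r₂ < r₃ := by linarith
  refine ⟨r₁, r₂, r₃, le_of_lt h10, h02, h12, h23, ?_⟩
  have hset : {w : ℝ | w^2*(w-s) + σ*w*(w+1) + C*(w+1)^2 = 0}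
      = {w : ℝ | w^3 + (σ+C-s)*w^2 + (σ+2*C)*w + C = 0} := by
    ext w
    simp only [Set.mem_setOf_eq]
    rw [show w^2*(w-s) + σ*w*(w+1) + C*(w+1)^2
      = w^3 + (σ+C-s)*w^2 + (σ+2*C)*w + C from by ring]
  rw [hset]
  exact cubic_rootset (σ+C-s) (σ+2*C) C r₁ r₂ r₃ h12 h23
    (by linear_combination hz₁) (by linear_combination hz₂) (by linear_combination hz₃)

/-- If `bc > ad`, with `λ₀ = bμ/d` and `ε* = bμ/(bc+ad)`, there exists
`δ > 0` such that for every `ε ∈ (ε*, ε* + δ)` there is `η > 0` with: for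
`λ ∈ (λ₀, λ₀ + η)` the cubic `P_{λ,ε}` has exactly three distinct real roots, all
positive, while for `λ ∈ (λ₀ − η, λ₀)` it has exactly three distinct real roots of
which exactly two are positive. -/
theorem stmt12 (a b c d μ : ℝ)
    (ha : 0 < a) (hb : 0 < b) (hc : 0 < c) (hd : 0 < d)
    (hμ : 0 < μ) (hbc : a * d < b * c) :
    ∃ δ : ℝ, 0 < δ ∧
      ∀ ε : ℝ, b * μ / (b * c + a * d) < ε → ε < b * μ / (b * c + a * d) + δ →
        ∃ η : ℝ, 0 < η ∧
          (∀ lam : ℝ, b * μ / d < lam → lam < b * μ / d + η →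
            ∃ r₁ r₂ r₃ : ℝ, 0 < r₁ ∧ r₁ < r₂ ∧ r₂ < r₃ ∧
              {w : ℝ | cubicP a b c d μ ε lam w = 0} = {r₁, r₂, r₃}) ∧
          (∀ lam : ℝ, b * μ / d - η < lam → lam < b * μ / d →
            ∃ r₁ r₂ r₃ : ℝ, r₁ ≤ 0 ∧ 0 < r₂ ∧ r₁ < r₂ ∧ r₂ < r₃ ∧
              {w : ℝ | cubicP a b c d μ ε lam w = 0} = {r₁, r₂, r₃}) := by
  have had : (0:ℝ) < a*d := by positivity
  have hbcad : (0:ℝ) < b*c + a*d := by positivity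
  have hbμ : (0:ℝ) < b*μ := by positivity
  set s : ℝ := (b*c - a*d)/(a*d) with hs_def
  have hs : 0 < s := div_pos (by linarith) had
  set σ₀ : ℝ := s^2/(8*(s+2)) with hσ₀_def
  have hσ₀pos : 0 < σ₀ := div_pos (pow_pos hs 2) (by linarith)
  refine ⟨σ₀ * (a*d) * (b*μ/(b*c+a*d))^2 / (b*μ),
    div_pos (mul_pos (mul_pos hσ₀pos had) (by positivity)) hbμ, ?_⟩
  intro ε hε1 hε2
  have hεpos : 0 < ε := lt_trans (by positivity) hε1
  have hεμ : b*μ < ε*(b*c+a*d) := (div_lt_iff₀ hbcad).mp hε1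
  set σ : ℝ := (ε*(b*c+a*d) - b*μ)/(ε*(a*d)) with hσ_def
  have hσpos : 0 < σ := div_pos (by linarith) (by positivity)
  have hσ₀le : σ ≤ σ₀ := by
    rw [hσ_def, div_le_iff₀ (by positivity)]
    have hkey : (b*μ/(b*c+a*d) + σ₀*(a*d)*(b*μ/(b*c+a*d))^2/(b*μ)) * (b*c+a*d)^2
        = b*μ*(b*c+a*d) + σ₀*(a*d)*(b*μ) := by
      field_simp
    have hA : ε*(b*c+a*d)^2 < b*μ*(b*c+a*d) + σ₀*(a*d)*(b*μ) := by
      rw [← hkey]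
      exact mul_lt_mul_of_pos_right hε2 (by positivity)
    nlinarith [hA, hεμ, mul_pos hσ₀pos had, hbcad,
      mul_lt_mul_of_pos_left hεμ (mul_pos hσ₀pos had)]
  set t : ℝ := σ/(2*s) with ht_def
  have h2st : 2*s*t = σ := by rw [ht_def]; field_simp
  set c₀ : ℝ := min (σ^2/(32*s)) (min (2*s^3/(2*s+1)^2)
    (min (σ/8) (s^3/(8*(s+2)^2)))) with hc₀_def
  have hc₀pos : 0 < c₀ := by
    refine lt_min (div_pos (pow_pos hσpos 2) (by linarith)) (lt_min ?_ (lt_min ?_ ?_))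
    · exact div_pos (by positivity) (by positivity)
    · linarith
    · exact div_pos (pow_pos hs 3) (by positivity)
  have hc₀a : c₀ ≤ σ^2/(32*s) := min_le_left _ _
  have hc₀b : c₀ ≤ 2*s^3/(2*s+1)^2 := le_trans (min_le_right _ _) (min_le_left _ _)
  have hc₀c : c₀ ≤ σ/8 :=
    le_trans (min_le_right _ _) (le_trans (min_le_right _ _) (min_le_left _ _))
  have hc₀d : c₀ ≤ s^3/(8*(s+2)^2) :=
    le_trans (min_le_right _ _) (le_trans (min_le_right _ _) (min_le_right _ _))
  refine ⟨c₀*(ε*a), mul_pos hc₀pos (by positivity), ?_, ?_⟩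
  · -- lam > λ₀ : C < 0, three positive roots
    intro lam h1 h2
    set C : ℝ := (b*μ - d*lam)/(ε*a*d) with hC_def
    have hdl : b*μ < lam*d := (div_lt_iff₀ hd).mp h1
    have hC0 : C < 0 := div_neg_of_neg_of_pos (by linarith) (by positivity)
    have hbμd : b*μ/d*d = b*μ := div_mul_cancel₀ _ (ne_of_gt hd)
    have h2' : lam*d < b*μ + (c₀*(ε*a))*d := by
      nlinarith [mul_lt_mul_of_pos_right h2 hd, hbμd]
    have hCabs : |C| < c₀ := by
      rw [abs_of_neg hC0]
      have hnegC : -C = (lam*d - b*μ)/(ε*a*d) := by rw [hC_def]; ring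
      rw [hnegC, div_lt_iff₀ (by positivity)]
      nlinarith [h2']
    obtain ⟨r₁, r₂, r₃, hr0, hr12, hr23, hset⟩ :=
      roots_neg s σ C t hs hσpos (hσ₀_def ▸ hσ₀le) h2st
        (lt_of_lt_of_le hCabs hc₀a) (lt_of_lt_of_le hCabs hc₀b)
        (lt_of_lt_of_le hCabs hc₀d) hC0
    refine ⟨r₁, r₂, r₃, hr0, hr12, hr23, ?_⟩
    rw [← hset]
    ext w
    simp only [Set.mem_setOf_eq]
    rw [show cubicP a b c d μ ε lam w = w^2*(w-s) + σ*w*(w+1) + C*(w+1)^2 by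
      rw [hC_def, hσ_def, hs_def]; unfold cubicP; field_simp; ring]
  · -- lam < λ₀ : C > 0
    intro lam h1 h2
    set C : ℝ := (b*μ - d*lam)/(ε*a*d) with hC_def
    have hdl : lam*d < b*μ := by
      have := mul_lt_mul_of_pos_right h2 hd
      have hbμd : b*μ/d*d = b*μ := div_mul_cancel₀ _ (ne_of_gt hd)
      nlinarith [this, hbμd]
    have hC0 : 0 < C := div_pos (by linarith) (by positivity)
    have hbμd : b*μ/d*d = b*μ := div_mul_cancel₀ _ (ne_of_gt hd)
    have h1' : b*μ - (c₀*(ε*a))*d < lam*d := by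
      nlinarith [mul_lt_mul_of_pos_right h1 hd, hbμd]
    have hCabs : |C| < c₀ := by
      rw [abs_of_pos hC0]
      rw [hC_def, div_lt_iff₀ (by positivity)]
      nlinarith [h1']
    obtain ⟨r₁, r₂, r₃, hr0, hr02, hr12, hr23, hset⟩ :=
      roots_pos s σ C t hs hσpos (hσ₀_def ▸ hσ₀le) h2st
        (lt_of_lt_of_le hCabs hc₀a) (lt_of_lt_of_le hCabs hc₀b)
        (lt_of_lt_of_le hCabs hc₀c) (lt_of_lt_of_le hCabs hc₀d) hC0
    refine ⟨r₁, r₂, r₃, hr0, hr02, hr12, hr23, ?_⟩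
    rw [← hset]
    ext w
    simp only [Set.mem_setOf_eq]
    rw [show cubicP a b c d μ ε lam w = w^2*(w-s) + σ*w*(w+1) + C*(w+1)^2 by
      rw [hC_def, hσ_def, hs_def]; unfold cubicP; field_simp; ring]
end

section
/- Let a, b, c, d, μ be positive real numbers with bc > ad, and set λ₀ = bμ/d and ε* = bμ/(bc + ad). Then there exists δ > 0 such that for every ε ∈ (ε*, ε* + δ) there exists η > 0 with the following property: for every λ ∈ (λ₀, λ₀ + η) the system (S), i.e. λ − εaw − b·v/(1+w) = 0 and μ − d·v + ε·c·w/(1+w) = 0, has exactly three solutions (w, v) with w > 0 and v > 0, while for every λ ∈ (λ₀ − η, λ₀) it has exactly two such solutions. In particular, the bifurcation diagram of constant coexistence states is S-shaped near λ₀. -/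
/-- A monic cubic with three distinct roots has no others. -/
lemma cubic_roots_eq (B C D r1 r2 r3 : ℝ) (h12 : r1 ≠ r2) (h13 : r1 ≠ r3) (h23 : r2 ≠ r3)
    (e1 : r1^3 + B*r1^2 + C*r1 + D = 0) (e2 : r2^3 + B*r2^2 + C*r2 + D = 0)
    (e3 : r3^3 + B*r3^2 + C*r3 + D = 0) (w : ℝ) (hw : w^3 + B*w^2 + C*w + D = 0) :
    w = r1 ∨ w = r2 ∨ w = r3 := by
  have h12' : r1 - r2 ≠ 0 := sub_ne_zero.2 h12
  have h13' : r1 - r3 ≠ 0 := sub_ne_zero.2 h13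
  have h23' : r2 - r3 ≠ 0 := sub_ne_zero.2 h23
  have q12 : r1^2 + r1*r2 + r2^2 + B*(r1+r2) + C = 0 := by
    have h : (r1 - r2) * (r1^2 + r1*r2 + r2^2 + B*(r1+r2) + C) = 0 := by
      linear_combination e1 - e2
    rcases mul_eq_zero.1 h with h | h
    · exact absurd h h12'
    · exact h
  have q13 : r1^2 + r1*r3 + r3^2 + B*(r1+r3) + C = 0 := by
    have h : (r1 - r3) * (r1^2 + r1*r3 + r3^2 + B*(r1+r3) + C) = 0 := by
      linear_combination e1 - e3
    rcases mul_eq_zero.1 h with h | h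
    · exact absurd h h13'
    · exact h
  have hB : B = -(r1 + r2 + r3) := by
    have h : (r2 - r3) * (r1 + r2 + r3 + B) = 0 := by linear_combination q12 - q13
    rcases mul_eq_zero.1 h with h | h
    · exact absurd h h23'
    · linarith
  have hC : C = r1*r2 + r1*r3 + r2*r3 := by
    rw [hB] at q12; nlinarith [q12]
  have hD : D = -(r1*r2*r3) := by
    rw [hB, hC] at e1; nlinarith [e1]
  have key : (w - r1) * (w - r2) * (w - r3) = 0 := by
    rw [hB, hC, hD] at hw; linear_combination hw
  rcases mul_eq_zero.1 key with h | h
  · rcases mul_eq_zero.1 h with h | h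
    · exact Or.inl (sub_eq_zero.1 h)
    · exact Or.inr (Or.inl (sub_eq_zero.1 h))
  · exact Or.inr (Or.inr (sub_eq_zero.1 h))

lemma ivt_up_s13 {f : ℝ → ℝ} (hf : Continuous f) {s t : ℝ} (hst : s < t)
    (hs : f s < 0) (ht : 0 < f t) : ∃ r, s < r ∧ r < t ∧ f r = 0 := by
  obtain ⟨r, hr, hfr⟩ := intermediate_value_Ioo hst.le hf.continuousOn ⟨hs, ht⟩
  exact ⟨r, hr.1, hr.2, hfr⟩

lemma ivt_down_s13 {f : ℝ → ℝ} (hf : Continuous f) {s t : ℝ} (hst : s < t)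
    (hs : 0 < f s) (ht : f t < 0) : ∃ r, s < r ∧ r < t ∧ f r = 0 := by
  obtain ⟨r, hr, hfr⟩ := intermediate_value_Ioo' hst.le hf.continuousOn ⟨ht, hs⟩
  exact ⟨r, hr.1, hr.2, hfr⟩

lemma sys_iff (a b c d μ ε lam w v : ℝ) (ha : 0 < a) (hd : 0 < d) (hε : 0 < ε)
    (hw : 0 < w) :
    (lam - ε * a * w - b * (v / (1 + w)) = 0 ∧ μ - d * v + ε * c * (w / (1 + w)) = 0) ↔
    (v = (μ * (1 + w) + ε * c * w) / (d * (1 + w)) ∧ cubicP a b c d μ ε lam w = 0) := by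
  have h1w : (1:ℝ) + w ≠ 0 := by positivity
  have ha' := ha.ne'
  have hd' := hd.ne'
  have hε' := hε.ne'
  have hkey : (ε * a * d) * cubicP a b c d μ ε lam w
      = -(d * (1 + w)^2
          * (lam - ε * a * w - b * (((μ * (1 + w) + ε * c * w) / (d * (1 + w))) / (1 + w)))) := by
    unfold cubicP
    field_simp
    ring
  constructor
  · rintro ⟨e1, e2⟩
    have hv : v = (μ * (1 + w) + ε * c * w) / (d * (1 + w)) := by
      field_simp at e2 ⊢
      linarith
    subst hv
    refine ⟨rfl, ?_⟩
    rw [e1, mul_zero, neg_zero] at hkey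
    exact (mul_eq_zero.1 hkey).resolve_left (by positivity)
  · rintro ⟨hv, hP⟩
    subst hv
    rw [hP, mul_zero] at hkey
    have h2 : lam - ε * a * w - b * (((μ * (1 + w) + ε * c * w) / (d * (1 + w))) / (1 + w)) = 0 := by
      have h := neg_eq_zero.1 hkey.symm
      rcases mul_eq_zero.1 h with h | h
      · exact absurd h (by positivity)
      · exact h
    exact ⟨h2, by field_simp; ring⟩

set_option maxHeartbeats 1000000 in
/-- If `bc > ad`, with `λ₀ = bμ/d` and `ε* = bμ/(bc+ad)`, there exists
`δ > 0` such that for every `ε ∈ (ε*, ε* + δ)` there is `η > 0` with: for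
`λ ∈ (λ₀, λ₀ + η)` the system (S) has exactly three solutions `(w, v)` with
`w, v > 0`, while for `λ ∈ (λ₀ − η, λ₀)` it has exactly two such solutions
(an S-shaped bifurcation diagram near `λ₀`). -/
theorem stmt13 (a b c d μ : ℝ)
    (ha : 0 < a) (hb : 0 < b) (hc : 0 < c) (hd : 0 < d)
    (hμ : 0 < μ) (hbc : a * d < b * c) :
    ∃ δ : ℝ, 0 < δ ∧
      ∀ ε : ℝ, b * μ / (b * c + a * d) < ε → ε < b * μ / (b * c + a * d) + δ →
        ∃ η : ℝ, 0 < η ∧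
          (∀ lam : ℝ, b * μ / d < lam → lam < b * μ / d + η →
            ∃ p₁ p₂ p₃ : ℝ × ℝ, p₁ ≠ p₂ ∧ p₁ ≠ p₃ ∧ p₂ ≠ p₃ ∧
              {p : ℝ × ℝ | 0 < p.1 ∧ 0 < p.2 ∧
                  lam - ε * a * p.1 - b * (p.2 / (1 + p.1)) = 0 ∧
                  μ - d * p.2 + ε * c * (p.1 / (1 + p.1)) = 0}
                = {p₁, p₂, p₃}) ∧
          (∀ lam : ℝ, b * μ / d - η < lam → lam < b * μ / d →
            ∃ p₁ p₂ : ℝ × ℝ, p₁ ≠ p₂ ∧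
              {p : ℝ × ℝ | 0 < p.1 ∧ 0 < p.2 ∧
                  lam - ε * a * p.1 - b * (p.2 / (1 + p.1)) = 0 ∧
                  μ - d * p.2 + ε * c * (p.1 / (1 + p.1)) = 0}
                = {p₁, p₂}) := by
  have habcd : (0:ℝ) < a*b*c*d := by positivity
  have hsqrtpos : 0 < Real.sqrt (a*b*c*d) := Real.sqrt_pos.2 habcd
  have hsq : Real.sqrt (a*b*c*d) < (b*c+a*d)/2 := by
    rw [show Real.sqrt (a*b*c*d) < (b*c+a*d)/2 ↔ a*b*c*d < ((b*c+a*d)/2)^2 from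
      Real.sqrt_lt' (by positivity)]
    nlinarith [sq_nonneg (b*c - a*d)]
  refine ⟨b*μ/(2*Real.sqrt (a*b*c*d)) - b*μ/(b*c+a*d), ?_, ?_⟩
  · have : b*μ/(b*c+a*d) < b*μ/(2*Real.sqrt (a*b*c*d)) := by
      apply div_lt_div_of_pos_left (by positivity) (by positivity)
      linarith
    linarith
  intro ε hε1 hε2
  have hεpos : 0 < ε := lt_trans (by positivity) hε1
  have hεs : ε < b*μ/(2*Real.sqrt (a*b*c*d)) := by linarith
  have hsm : ε * (2*Real.sqrt (a*b*c*d)) < b*μ := (lt_div_iff₀ (by positivity)).1 hεs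
  have hdisc : 4*(a*b*c*d)*ε^2 < (b*μ)^2 := by
    have h2 : (ε*(2*Real.sqrt (a*b*c*d)))^2 < (b*μ)^2 :=
      pow_lt_pow_left₀ hsm (by positivity) (by norm_num)
    calc 4*(a*b*c*d)*ε^2 = ε^2 * (2^2 * (Real.sqrt (a*b*c*d))^2) := by
          rw [Real.sq_sqrt habcd.le]; ring
      _ = (ε*(2*Real.sqrt (a*b*c*d)))^2 := by ring
      _ < (b*μ)^2 := h2
  have hεμ : b*μ < ε*(b*c+a*d) := by
    have := (div_lt_iff₀ (by positivity : (0:ℝ) < b*c+a*d)).1 hε1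
    linarith
  have h4pos : (0:ℝ) < 4*a*d*ε^2*(b*c - a*d) := by
    have h := sub_pos.2 hbc
    positivity
  have hsq2 : (2*ε*a*d)^2 < (b*μ)^2 := by
    have hid : (2*ε*a*d)^2 = 4*(a*b*c*d)*ε^2 - 4*a*d*ε^2*(b*c-a*d) := by ring
    rw [hid]; linarith
  have h2ad : 2*ε*a*d < b*μ := by
    by_contra h
    push_neg at h
    exact absurd (pow_le_pow_left₀ (by positivity) h 2) (not_le.2 hsq2)
  obtain ⟨B0, hB0def⟩ : ∃ x : ℝ, x = 2 - b*μ/(d*(ε*a)) := ⟨_, rfl⟩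
  obtain ⟨C0, hC0def⟩ : ∃ x : ℝ, x = 1 + b*c/(a*d) - b*μ/(ε*a*d) := ⟨_, rfl⟩
  have hC0 : 0 < C0 := by
    have h : C0 = (ε*(a*d+b*c) - b*μ)/(ε*a*d) := by
      rw [hC0def]; field_simp
    rw [h]
    apply div_pos (by linarith) (by positivity)
  have hB0 : B0 < 0 := by
    have h : (2:ℝ) < b*μ/(d*(ε*a)) := by
      rw [lt_div_iff₀ (by positivity)]; linarith
    rw [hB0def]; linarith
  have hD2 : 4*C0 < B0^2 := by
    have h : B0^2 - 4*C0 = ((b*μ)^2 - 4*(a*b*c*d)*ε^2)/(ε*a*d)^2 := by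
      rw [hB0def, hC0def]; field_simp; ring
    have h2 : 0 < ((b*μ)^2 - 4*(a*b*c*d)*ε^2)/(ε*a*d)^2 :=
      div_pos (by linarith) (by positivity)
    linarith [h ▸ h2]
  obtain ⟨t2, ht2def⟩ : ∃ x : ℝ, x = -B0/2 := ⟨_, rfl⟩
  have ht2 : 0 < t2 := by rw [ht2def]; linarith
  obtain ⟨t1, ht1def⟩ : ∃ x : ℝ, x = min t2 (C0/(-B0)) / 2 := ⟨_, rfl⟩
  have hCB : 0 < C0/(-B0) := div_pos hC0 (by linarith)
  have ht1 : 0 < t1 := by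
    rw [ht1def]
    have h := lt_min ht2 hCB
    linarith
  have ht12 : t1 < t2 := by
    rw [ht1def]
    have : min t2 (C0/(-B0)) ≤ t2 := min_le_left _ _
    linarith
  have hq1 : 0 < t1^2 + B0*t1 + C0 := by
    have h1 : t1 ≤ C0/(-B0)/2 := by
      rw [ht1def]
      have := min_le_right t2 (C0/(-B0))
      linarith
    have hB0pos : 0 < -B0 := by linarith
    have h1' : t1 * (-B0 * 2) ≤ C0 := by
      rw [div_div] at h1
      exact (le_div_iff₀ (by positivity)).1 h1
    nlinarith [h1', mul_pos hB0pos ht1, sq_nonneg t1]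
  have hq2 : t2^2 + B0*t2 + C0 < 0 := by
    rw [ht2def]
    have h : (-B0/2)^2 + B0*(-B0/2) + C0 = C0 - B0^2/4 := by ring
    rw [h]; linarith
  obtain ⟨t3, ht3def⟩ : ∃ x : ℝ, x = -B0 + C0 + 1 := ⟨_, rfl⟩
  have ht23 : t2 < t3 := by rw [ht2def, ht3def]; linarith
  have hq3 : 0 < t3^2 + B0*t3 + C0 := by
    rw [ht3def]
    have hid : (-B0+C0+1)^2 + B0*(-B0+C0+1) + C0 = (-B0+C0+1)*(C0+1) + C0 := by ring
    rw [hid]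
    have := mul_pos (show (0:ℝ) < -B0+C0+1 by linarith) (show (0:ℝ) < C0+1 by linarith)
    linarith
  -- identities
  have hP0 : ∀ w : ℝ, cubicP a b c d μ ε (b*μ/d) w = w*(w^2 + B0*w + C0) := by
    intro w
    unfold cubicP
    rw [hB0def, hC0def]
    field_simp
    ring
  have hpert : ∀ lam w : ℝ, cubicP a b c d μ ε lam w
      = cubicP a b c d μ ε (b*μ/d) w + ((b*μ/d) - lam)*(1+w)^2/(ε*a) := by
    intro lam w
    unfold cubicP
    field_simp
    ring
  have hPat0 : ∀ lam : ℝ, cubicP a b c d μ ε lam 0 = (b*μ - d*lam)/(ε*a*d) := by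
    intro lam; unfold cubicP; ring
  have hPatm1 : ∀ lam : ℝ, cubicP a b c d μ ε lam (-1) = -(b*c)/(a*d) := by
    intro lam; unfold cubicP; field_simp; ring
  have hcont : ∀ lam : ℝ, Continuous (cubicP a b c d μ ε lam) := by
    intro lam; unfold cubicP; fun_prop
  obtain ⟨M1, hM1def⟩ : ∃ x : ℝ, x = t1*(t1^2 + B0*t1 + C0) := ⟨_, rfl⟩
  obtain ⟨M2, hM2def⟩ : ∃ x : ℝ, x = -(t2*(t2^2 + B0*t2 + C0)) := ⟨_, rfl⟩
  obtain ⟨M3, hM3def⟩ : ∃ x : ℝ, x = t3*(t3^2 + B0*t3 + C0) := ⟨_, rfl⟩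
  have hM1 : 0 < M1 := by rw [hM1def]; exact mul_pos ht1 hq1
  have hM2 : 0 < M2 := by
    rw [hM2def]
    have := mul_pos ht2 (neg_pos.2 hq2)
    nlinarith
  have hM3 : 0 < M3 := by rw [hM3def]; exact mul_pos (by linarith) hq3
  have h1t1 : (0:ℝ) < 1 + t1 := by linarith
  have h1t2 : (0:ℝ) < 1 + t2 := by linarith
  have h1t3 : (0:ℝ) < 1 + t3 := by linarith
  obtain ⟨η, hηdef⟩ : ∃ x : ℝ,
      x = (ε*a/2) * min (M1/(1+t1)^2) (min (M2/(1+t2)^2) (M3/(1+t3)^2)) := ⟨_, rfl⟩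
  have hη : 0 < η := by
    rw [hηdef]
    have := lt_min (div_pos hM1 (by positivity))
      (lt_min (div_pos hM2 (by positivity)) (div_pos hM3 (by positivity)))
    positivity
  -- sign preservation bounds
  have hbound : ∀ lam : ℝ, |b*μ/d - lam| < η →
      (M1/2 < cubicP a b c d μ ε lam t1 ∧ cubicP a b c d μ ε lam t2 < -(M2/2) ∧
       M3/2 < cubicP a b c d μ ε lam t3) := by
    intro lam hlam
    have key : ∀ t M : ℝ, 0 < 1 + t → 0 < M → η ≤ (ε*a/2)*(M/(1+t)^2) →
        |((b*μ/d) - lam)*(1+t)^2/(ε*a)| < M/2 := by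
      intro t M h1t hM hle
      have hK : (0:ℝ) < (1+t)^2/(ε*a) := by positivity
      rw [abs_div, abs_of_pos (by positivity : (0:ℝ) < ε*a), abs_mul,
        abs_of_pos (by positivity : (0:ℝ) < (1+t)^2)]
      rw [div_lt_iff₀ (by positivity : (0:ℝ) < ε*a)]
      have h2 : |b*μ/d - lam| * (1+t)^2 < η * (1+t)^2 := by
        apply mul_lt_mul_of_pos_right hlam (by positivity)
      have h3 : η * (1+t)^2 ≤ ((ε*a/2)*(M/(1+t)^2)) * (1+t)^2 :=
        mul_le_mul_of_nonneg_right hle (by positivity)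
      have h4 : ((ε*a/2)*(M/(1+t)^2)) * (1+t)^2 = M/2 * (ε*a) := by
        field_simp
      linarith only [h2, h3, h4]
    have e1 := key t1 M1 h1t1 hM1 (by
      rw [hηdef]
      exact mul_le_mul_of_nonneg_left (min_le_left _ _) (by positivity))
    have e2 := key t2 M2 h1t2 hM2 (by
      rw [hηdef]
      exact mul_le_mul_of_nonneg_left (le_trans (min_le_right _ _) (min_le_left _ _))
        (by positivity))
    have e3 := key t3 M3 h1t3 hM3 (by
      rw [hηdef]
      exact mul_le_mul_of_nonneg_left (le_trans (min_le_right _ _) (min_le_right _ _))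
        (by positivity))
    have a1 := abs_lt.1 e1
    have a2 := abs_lt.1 e2
    have a3 := abs_lt.1 e3
    refine ⟨?_, ?_, ?_⟩
    · rw [hpert lam t1, hP0 t1, ← hM1def]; linarith only [a1.1]
    · rw [hpert lam t2, hP0 t2]
      have : t2*(t2^2 + B0*t2 + C0) = -M2 := by rw [hM2def]; ring
      rw [this]; linarith only [a2.2]
    · rw [hpert lam t3, hP0 t3, ← hM3def]; linarith only [a3.1]
  -- positivity of the second coordinate
  have hVpos : ∀ w : ℝ, 0 < w → 0 < (μ * (1 + w) + ε * c * w) / (d * (1 + w)) := by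
    intro w hw
    have h1 : (0:ℝ) < 1 + w := by linarith only [hw]
    have h2 := mul_pos hμ h1
    have h3 := mul_pos (mul_pos hεpos hc) hw
    exact div_pos (by linarith only [h2, h3]) (mul_pos hd h1)
  refine ⟨η, hη, ?_, ?_⟩
  · -- three solutions for lam ∈ (λ₀, λ₀+η)
    intro lam hl1 hl2
    have hlam : |b*μ/d - lam| < η := by
      rw [abs_lt]; constructor <;> linarith only [hl1, hl2, hη]
    obtain ⟨s1, s2, s3⟩ := hbound lam hlam
    have hf0 : cubicP a b c d μ ε lam 0 < 0 := by
      rw [hPat0 lam]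
      apply div_neg_of_neg_of_pos _ (by positivity)
      have h := (div_lt_iff₀' hd).1 hl1
      linarith only [h]
    obtain ⟨r1, hr10, hr11, hfr1⟩ :=
      ivt_up_s13 (hcont lam) ht1 hf0 (by linarith only [s1, hM1])
    obtain ⟨r2, hr21, hr22, hfr2⟩ :=
      ivt_down_s13 (hcont lam) ht12 (by linarith only [s1, hM1]) (by linarith only [s2, hM2])
    obtain ⟨r3, hr32, hr33, hfr3⟩ :=
      ivt_up_s13 (hcont lam) ht23 (by linarith only [s2, hM2]) (by linarith only [s3, hM3])
    have h12 : r1 < r2 := lt_trans hr11 hr21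
    have h23 : r2 < r3 := lt_trans hr22 hr32
    have h13 : r1 < r3 := lt_trans h12 h23
    have hr2pos : 0 < r2 := lt_trans ht1 hr21
    have hr3pos : 0 < r3 := lt_trans ht2 hr32
    refine ⟨(r1, (μ * (1 + r1) + ε * c * r1) / (d * (1 + r1))),
      (r2, (μ * (1 + r2) + ε * c * r2) / (d * (1 + r2))),
      (r3, (μ * (1 + r3) + ε * c * r3) / (d * (1 + r3))),
      fun h => h12.ne (congrArg Prod.fst h),
      fun h => h13.ne (congrArg Prod.fst h),
      fun h => h23.ne (congrArg Prod.fst h), ?_⟩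
    ext ⟨w, v⟩
    simp only [Set.mem_setOf_eq, Set.mem_insert_iff, Set.mem_singleton_iff, Prod.mk.injEq]
    constructor
    · rintro ⟨hw, hv, e1, e2⟩
      obtain ⟨hveq, hPw⟩ := (sys_iff a b c d μ ε lam w v ha hd hεpos hw).1 ⟨e1, e2⟩
      have hroots := cubic_roots_eq (2 - lam / (ε * a))
        (1 + b * c / (a * d) + (b * μ - 2 * d * lam) / (ε * a * d))
        ((b * μ - d * lam) / (ε * a * d)) r1 r2 r3 h12.ne h13.ne h23.ne
        hfr1 hfr2 hfr3 w hPw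
      rcases hroots with h | h | h
      · exact Or.inl ⟨h, by rw [hveq, h]⟩
      · exact Or.inr (Or.inl ⟨h, by rw [hveq, h]⟩)
      · exact Or.inr (Or.inr ⟨h, by rw [hveq, h]⟩)
    · rintro (⟨rfl, rfl⟩ | ⟨rfl, rfl⟩ | ⟨rfl, rfl⟩)
      · exact ⟨hr10, hVpos _ hr10,
          (sys_iff a b c d μ ε lam _ _ ha hd hεpos hr10).2 ⟨rfl, hfr1⟩⟩
      · exact ⟨hr2pos, hVpos _ hr2pos,
          (sys_iff a b c d μ ε lam _ _ ha hd hεpos hr2pos).2 ⟨rfl, hfr2⟩⟩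
      · exact ⟨hr3pos, hVpos _ hr3pos,
          (sys_iff a b c d μ ε lam _ _ ha hd hεpos hr3pos).2 ⟨rfl, hfr3⟩⟩
  · -- two solutions for lam ∈ (λ₀-η, λ₀)
    intro lam hl1 hl2
    have hlam : |b*μ/d - lam| < η := by
      rw [abs_lt]; constructor <;> linarith only [hl1, hl2, hη]
    obtain ⟨s1, s2, s3⟩ := hbound lam hlam
    have hf0 : 0 < cubicP a b c d μ ε lam 0 := by
      rw [hPat0 lam]
      apply div_pos _ (by positivity)
      have h := (lt_div_iff₀' hd).1 hl2
      linarith only [h]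
    have hfm1 : cubicP a b c d μ ε lam (-1) < 0 := by
      rw [hPatm1 lam]
      apply div_neg_of_neg_of_pos _ (by positivity)
      have := mul_pos hb hc
      linarith only [this]
    obtain ⟨r1, hr10, hr11, hfr1⟩ :=
      ivt_up_s13 (hcont lam) (by norm_num : (-1:ℝ) < 0) hfm1 hf0
    obtain ⟨r2, hr21, hr22, hfr2⟩ :=
      ivt_down_s13 (hcont lam) ht12 (by linarith only [s1, hM1]) (by linarith only [s2, hM2])
    obtain ⟨r3, hr32, hr33, hfr3⟩ :=
      ivt_up_s13 (hcont lam) ht23 (by linarith only [s2, hM2]) (by linarith only [s3, hM3])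
    have hr2pos : 0 < r2 := lt_trans ht1 hr21
    have hr3pos : 0 < r3 := lt_trans ht2 hr32
    have h12 : r1 < r2 := lt_trans hr11 hr2pos
    have h23 : r2 < r3 := lt_trans hr22 hr32
    have h13 : r1 < r3 := lt_trans h12 h23
    refine ⟨(r2, (μ * (1 + r2) + ε * c * r2) / (d * (1 + r2))),
      (r3, (μ * (1 + r3) + ε * c * r3) / (d * (1 + r3))),
      fun h => h23.ne (congrArg Prod.fst h), ?_⟩
    ext ⟨w, v⟩
    simp only [Set.mem_setOf_eq, Set.mem_insert_iff, Set.mem_singleton_iff, Prod.mk.injEq]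
    constructor
    · rintro ⟨hw, hv, e1, e2⟩
      obtain ⟨hveq, hPw⟩ := (sys_iff a b c d μ ε lam w v ha hd hεpos hw).1 ⟨e1, e2⟩
      have hroots := cubic_roots_eq (2 - lam / (ε * a))
        (1 + b * c / (a * d) + (b * μ - 2 * d * lam) / (ε * a * d))
        ((b * μ - d * lam) / (ε * a * d)) r1 r2 r3 h12.ne h13.ne h23.ne
        hfr1 hfr2 hfr3 w hPw
      rcases hroots with h | h | h
      · exact absurd (h ▸ hw) (not_lt.2 hr11.le)
      · exact Or.inl ⟨h, by rw [hveq, h]⟩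
      · exact Or.inr ⟨h, by rw [hveq, h]⟩
    · rintro (⟨rfl, rfl⟩ | ⟨rfl, rfl⟩)
      · exact ⟨hr2pos, hVpos _ hr2pos,
          (sys_iff a b c d μ ε lam _ _ ha hd hεpos hr2pos).2 ⟨rfl, hfr2⟩⟩
      · exact ⟨hr3pos, hVpos _ hr3pos,
          (sys_iff a b c d μ ε lam _ _ ha hd hεpos hr3pos).2 ⟨rfl, hfr3⟩⟩
end
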